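/- arXiv:2504.15180 — 6 statements merged into one kernel-verified Lean document; each statement's English description precedes it below -/
import Mathlib

section
/- Let n = 1 and d_j = j^{−2} for j ∈ ℕ (so k_j(x) = (j/2)e^{−j|x|}). Suppose K ∈ L¹(ℝ) is even with K(x) = J(|x|), J ∈ C([0,∞)), and the limit lim_{r→∞} e^r J(r) exists; set h(λ) := J(−log λ)/λ for λ ∈ (0,1] and h(0) := lim_{r→∞} e^r J(r). Then for any N ∈ ℕ and any real constants α₁, …, α_{N+1}, ‖K − K_{N+1}‖_{L¹(ℝ)} ≤ 2 · max_{λ∈[0,1]} |h(λ) − P_N(λ)|, where P_N(λ) := Σ_{j=0}^N α_{j+1} ((j+1)/2) λ^j and K_{N+1} := Σ_{j=1}^{N+1} α_j k_j. -/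
open MeasureTheory Real Set Filter
open scoped ENNReal NNReal

noncomputable section

/-- Euclidean space `ℝⁿ`. -/
abbrev Eu (n : ℕ) := EuclideanSpace ℝ (Fin n)

/-- The heat kernel `H(t,x;D) = (4πDt)^{-n/2} exp(-|x|²/(4Dt))`. -/
noncomputable def heatK (n : ℕ) (D t : ℝ) (x : Eu n) : ℝ :=
  (4 * π * D * t) ^ (-(n : ℝ) / 2) * Real.exp (-‖x‖ ^ 2 / (4 * D * t))

/-- Spatial convolution `(K*u)(x) = ∫ K(x-y) u(y) dy`. -/
noncomputable def conv {n : ℕ} (K u : Eu n → ℝ) (x : Eu n) : ℝ := ∫ y, K (x - y) * u y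

/-- Membership in `BC(ℝⁿ) ∩ Lᵖ(ℝⁿ)`. -/
def InBCLp {n : ℕ} (p : ℝ≥0∞) (g : Eu n → ℝ) : Prop :=
  Continuous g ∧ (∃ M, ∀ x, |g x| ≤ M) ∧ MemLp g p volume

/-- `u ∈ C([0,T]; BC(ℝⁿ) ∩ Lᵖ(ℝⁿ))`: membership for every time, and continuity in
time with respect to the sup-norm together with the `Lᵖ` norm. -/
def ContBCLp {n : ℕ} (T : ℝ) (p : ℝ≥0∞) (u : ℝ → Eu n → ℝ) : Prop :=
  (∀ t ∈ Icc (0:ℝ) T, InBCLp p (u t)) ∧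
  ∀ t₀ ∈ Icc (0:ℝ) T,
    Tendsto (fun t => eLpNorm (fun x => u t x - u t₀ x) ⊤ volume
      + eLpNorm (fun x => u t x - u t₀ x) p volume) (nhdsWithin t₀ (Icc 0 T)) (nhds 0)

/-- `f(0,0) = 0` together with the global Lipschitz estimate with constant `Cf`. -/
def LipF (f : ℝ → ℝ → ℝ) (Cf : ℝ) : Prop :=
  f 0 0 = 0 ∧ 0 < Cf ∧ ∀ u₁ v₁ u₂ v₂ : ℝ, |f u₁ v₁ - f u₂ v₂| ≤ Cf * (|u₁ - u₂| + |v₁ - v₂|)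

/-- A radial function on `ℝⁿ`. -/
def IsRadial {n : ℕ} (K : Eu n → ℝ) : Prop := ∀ x y : Eu n, ‖x‖ = ‖y‖ → K x = K y

/-- Mild solution of the nonlocal problem (NP) on `[0,T]`. -/
def IsMildNP {n : ℕ} (D : ℝ) (f : ℝ → ℝ → ℝ) (K : Eu n → ℝ) (p : ℝ≥0∞) (T : ℝ)
    (u₀ : Eu n → ℝ) (u : ℝ → Eu n → ℝ) : Prop :=
  ContBCLp T p u ∧ u 0 = u₀ ∧
  ∀ t ∈ Ioc (0:ℝ) T, ∀ x,
    u t x = conv (heatK n D t) u₀ x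
      + ∫ s in (0:ℝ)..t, conv (heatK n D (t - s)) (fun y => f (u s y) (conv K (u s) y)) x

/-- The modified Bessel function of the second kind
`M_ν(r) = ∫₀^∞ e^{-r cosh s} cosh (ν s) ds`. -/
noncomputable def besselM (ν r : ℝ) : ℝ :=
  ∫ s in Ioi (0:ℝ), Real.exp (-r * Real.cosh s) * Real.cosh (ν * s)

/-- `G(r) = (2π)^{-n/2} (1/r)^{n/2-1} M_{n/2-1}(r)`. -/
noncomputable def greenG (n : ℕ) (r : ℝ) : ℝ :=
  (2 * π) ^ (-(n : ℝ) / 2) * r ^ (-((n : ℝ) / 2 - 1)) * besselM ((n : ℝ) / 2 - 1) r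

/-- The Green function `k_d(x) = d^{-n/2} G(|x|/√d)` of `-dΔ + 1` on `ℝⁿ`. -/
noncomputable def greenK (n : ℕ) (d : ℝ) (x : Eu n) : ℝ :=
  d ^ (-(n : ℝ) / 2) * greenG n (‖x‖ / Real.sqrt d)

/-- Mild solution of the reaction–diffusion system (RD_δ) on `[0,T]` with the
initial condition `(u₀, k₁*u₀, …, k_N*u₀)`. -/
def IsMildRD {n : ℕ} (N : ℕ) (D δ : ℝ) (f : ℝ → ℝ → ℝ) (α d : Fin N → ℝ) (p : ℝ≥0∞) (T : ℝ)
    (u₀ : Eu n → ℝ) (u : ℝ → Eu n → ℝ) (v : Fin N → ℝ → Eu n → ℝ) : Prop :=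
  ContBCLp T p u ∧ (∀ j, ContBCLp T p (v j)) ∧
  u 0 = u₀ ∧ (∀ j, v j 0 = conv (greenK n (d j)) u₀) ∧
  (∀ t ∈ Ioc (0:ℝ) T, ∀ x,
    u t x = conv (heatK n D t) u₀ x
      + ∫ s in (0:ℝ)..t, conv (heatK n D (t - s))
          (fun y => f (u s y) (∑ j, α j * v j s y)) x) ∧
  (∀ j, ∀ t ∈ Ioc (0:ℝ) T, ∀ x,
    v j t x = Real.exp (-t / δ) * conv (heatK n (d j / δ) t) (conv (greenK n (d j)) u₀) x
      + (1 / δ) * ∫ s in (0:ℝ)..t,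
          Real.exp (-(t - s) / δ) * conv (heatK n (d j / δ) (t - s)) (u s) x)

/-- The Laplacian of `g : ℝⁿ → ℝ`. -/
noncomputable def lap {n : ℕ} (g : Eu n → ℝ) (x : Eu n) : ℝ :=
  ∑ i : Fin n, iteratedFDeriv ℝ 2 g x ![EuclideanSpace.single i 1, EuclideanSpace.single i 1]

/-- `u ∈ C^{1,2}((0,T] × ℝⁿ)`. -/
def IsC12 {n : ℕ} (T : ℝ) (u : ℝ → Eu n → ℝ) : Prop :=
  (∀ x, DifferentiableOn ℝ (fun t => u t x) (Ioc 0 T)) ∧ ∀ t ∈ Ioc (0:ℝ) T, ContDiff ℝ 2 (u t)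

/-- Classical solution of (NP) on `(0,T]`. -/
def IsClassicalNP {n : ℕ} (D : ℝ) (f : ℝ → ℝ → ℝ) (K : Eu n → ℝ) (p : ℝ≥0∞) (T : ℝ)
    (u₀ : Eu n → ℝ) (u : ℝ → Eu n → ℝ) : Prop :=
  ContBCLp T p u ∧ u 0 = u₀ ∧ IsC12 T u ∧
  ∀ t ∈ Ioc (0:ℝ) T, ∀ x,
    HasDerivAt (fun s => u s x) (D * lap (u t) x + f (u t x) (conv K (u t) x)) t

/-- The Abel-type transform `A(r) = -(2r/π) ∫₀^∞ J'(r cosh s) ds`. -/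
noncomputable def abelA (J : ℝ → ℝ) (r : ℝ) : ℝ :=
  -(2 * r / π) * ∫ s in Ioi (0:ℝ), deriv J (r * Real.cosh s)

/-- The modulus of continuity of `g` on `[0,1]`. -/
noncomputable def modCont (g : ℝ → ℝ) (η : ℝ) : ℝ :=
  sSup {c | ∃ l₁ ∈ Icc (0:ℝ) 1, ∃ l₂ ∈ Icc (0:ℝ) 1, |l₁ - l₂| ≤ η ∧ c = |g l₁ - g l₂|}

/-- The Bernstein coefficients `β_{j,N}[h]`. -/
noncomputable def bernCoef (h : ℝ → ℝ) (N j : ℕ) : ℝ :=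
  ∑ ν ∈ Finset.range (j + 1),
    (-1 : ℝ) ^ (j - ν) * h ((ν : ℝ) / (N : ℝ)) * (N.choose j : ℝ) * (j.choose ν : ℝ)

/-- The constants `c_{j,n}`. -/
noncomputable def cjn (n j : ℕ) : ℝ :=
  if n = 1 then ((j : ℝ) + 1) / 2
  else if n = 2 then ((j : ℝ) + 1) ^ 2 / (2 * π)
  else ((j : ℝ) + 1) ^ 2 / (4 * π)

/-- The Chebyshev nodes `r_{j,N+1} = 1/2 + (1/2) cos((2j+1)π/(2(N+1)))`. -/
noncomputable def chebNode (N : ℕ) (j : Fin (N + 1)) : ℝ :=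
  1 / 2 + Real.cos ((2 * (j : ℝ) + 1) * π / (2 * ((N : ℝ) + 1))) / 2

/-- The coefficients `l_{j,N}[h]` of the monomial expansion of the Lagrange
interpolation polynomial of `h` at the Chebyshev nodes `r_{0,N+1}, …, r_{N,N+1}`. -/
noncomputable def lagCoef (h : ℝ → ℝ) (N j : ℕ) : ℝ :=
  ((Lagrange.interpolate (Finset.univ : Finset (Fin (N + 1))) (chebNode N))
    (fun i => h (chebNode N i))).coeff j

/-- The dimension-dependent assumption on the kernel `K`, together with the
associated function `h` on `[0,1]` (Assumption 2.1 of the paper). -/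
def KernelAssumptionH (n : ℕ) (K : Eu n → ℝ) (h : ℝ → ℝ) : Prop :=
  Integrable K volume ∧
  ((n = 1 ∧ ∃ J : ℝ → ℝ, (∀ x, K x = J ‖x‖) ∧ ContinuousOn J (Ici 0) ∧
      ∃ L, Tendsto (fun r => Real.exp r * J r) atTop (nhds L) ∧
        h 0 = L ∧ ∀ lam ∈ Ioc (0:ℝ) 1, h lam = J (-Real.log lam) / lam) ∨
   (n = 2 ∧ ∃ J : ℝ → ℝ, (∀ x, K x = J ‖x‖) ∧ ContDiffOn ℝ 1 J (Ici 0) ∧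
      (∃ a > (1/2 : ℝ), ∃ L, Tendsto (fun r => r ^ a * Real.exp r * deriv J r) atTop (nhds L)) ∧
      h 0 = 0 ∧ ∀ lam ∈ Ioc (0:ℝ) 1, h lam = abelA J (-Real.log lam) / lam) ∨
   (n = 3 ∧ ∃ J : ℝ → ℝ, (∀ x, x ≠ 0 → K x = J ‖x‖) ∧ ContinuousOn J (Ioi 0) ∧
      (∃ L₀, Tendsto (fun r => r * J r) (nhdsWithin 0 (Ioi 0)) (nhds L₀) ∧ h 1 = L₀) ∧
      (∃ Li, Tendsto (fun r => r * Real.exp r * J r) atTop (nhds Li) ∧ h 0 = Li) ∧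
      ∀ lam ∈ Ioo (0:ℝ) 1, h lam = -Real.log lam * J (-Real.log lam) / lam))

/-- The dimension-dependent assumption on the kernel `K` (Assumption 2.1). -/
def KernelAssumption (n : ℕ) (K : Eu n → ℝ) : Prop :=
  Integrable K volume ∧
  ((n = 1 ∧ ∃ J : ℝ → ℝ, (∀ x, K x = J ‖x‖) ∧ ContinuousOn J (Ici 0) ∧
      ∃ L, Tendsto (fun r => Real.exp r * J r) atTop (nhds L)) ∨
   (n = 2 ∧ ∃ J : ℝ → ℝ, (∀ x, K x = J ‖x‖) ∧ ContDiffOn ℝ 1 J (Ici 0) ∧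
      ∃ a > (1/2 : ℝ), ∃ L, Tendsto (fun r => r ^ a * Real.exp r * deriv J r) atTop (nhds L)) ∨
   (n = 3 ∧ ∃ J : ℝ → ℝ, (∀ x, x ≠ 0 → K x = J ‖x‖) ∧ ContinuousOn J (Ioi 0) ∧
      (∃ L₀, Tendsto (fun r => r * J r) (nhdsWithin 0 (Ioi 0)) (nhds L₀)) ∧
      (∃ Li, Tendsto (fun r => r * Real.exp r * J r) atTop (nhds Li))))

/-!
Under the substitution `λ = e^{-|x|}` one has `k_j(x) = (j/2) λ^j` and `K(x) = λ h(λ)`, so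
`K(x) - K_{N+1}(x) = λ (h(λ) - P_N(λ))`. Hence the integrand is at most `C e^{-|x|}`, and
`∫ e^{-|x|} dx = 2`.
-/

theorem integral_exp_neg_abs : ∫ x : ℝ, exp (-|x|) = 2 := by
  rw [integral_comp_abs (f := fun x => exp (-x)), integral_exp_neg_Ioi_zero, mul_one]

theorem integrable_exp_neg_abs : Integrable fun x : ℝ => exp (-|x|) :=
  .of_integral_ne_zero (by rw [integral_exp_neg_abs]; exact two_ne_zero)

theorem integral_abs_le_of_abs_le_mul_exp_neg_abs {f : ℝ → ℝ} {C : ℝ}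
    (hf : ∀ x, |f x| ≤ C * exp (-|x|)) : ∫ x, |f x| ≤ 2 * C :=
  calc ∫ x, |f x| ≤ ∫ x, C * exp (-|x|) :=
        integral_mono_of_nonneg (.of_forall fun _ => abs_nonneg _)
          (integrable_exp_neg_abs.const_mul C) (.of_forall hf)
    _ = 2 * C := by rw [integral_const_mul, integral_exp_neg_abs, mul_comm]

theorem sum_mul_exp_neg_succ_mul {ι : Type*} (s : Finset ι) (a : ι → ℝ) (k : ι → ℕ) (t : ℝ) :
    ∑ j ∈ s, a j * exp (-((k j : ℝ) + 1) * t) = exp (-t) * ∑ j ∈ s, a j * exp (-t) ^ k j := by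
  rw [Finset.mul_sum]
  refine Finset.sum_congr rfl fun j _ => ?_
  rw [mul_left_comm, ← exp_nat_mul, ← exp_add]
  congr 2
  ring

theorem abs_sub_sum_mul_exp_neg_succ_mul_le {ι : Type*} (s : Finset ι) (a : ι → ℝ)
    (k : ι → ℕ) {y t C : ℝ} (h : |y / exp (-t) - ∑ j ∈ s, a j * exp (-t) ^ k j| ≤ C) :
    |y - ∑ j ∈ s, a j * exp (-((k j : ℝ) + 1) * t)| ≤ C * exp (-t) := by
  have hpos := exp_pos (-t)
  calc |y - ∑ j ∈ s, a j * exp (-((k j : ℝ) + 1) * t)|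
      = exp (-t) * |y / exp (-t) - ∑ j ∈ s, a j * exp (-t) ^ k j| := by
        rw [sum_mul_exp_neg_succ_mul, ← abs_of_pos hpos, ← abs_mul, abs_of_pos hpos, mul_sub,
          mul_div_cancel₀ _ hpos.ne']
    _ ≤ C * exp (-t) := by rw [mul_comm]; exact mul_le_mul_of_nonneg_right h hpos.le

theorem statement5_general (K J : ℝ → ℝ) (L : ℝ)
    (hKJ : ∀ x : ℝ, K x = J |x|)
    (N : ℕ) (α : Fin (N + 1) → ℝ) (C : ℝ)
    (hC : ∀ lam ∈ Icc (0:ℝ) 1,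
      |(if lam = 0 then L else J (-Real.log lam) / lam)
        - ∑ j : Fin (N + 1), α j * (((j : ℝ) + 1) / 2) * lam ^ (j : ℕ)| ≤ C) :
    (∫ x : ℝ, |K x - ∑ j : Fin (N + 1),
        α j * (((j : ℝ) + 1) / 2) * Real.exp (-((j : ℝ) + 1) * |x|)|) ≤ 2 * C := by
  refine integral_abs_le_of_abs_le_mul_exp_neg_abs fun x => ?_
  have hx := hC (exp (-|x|))
    ⟨(exp_pos _).le, exp_le_one_iff.mpr (neg_nonpos.mpr (abs_nonneg x))⟩
  rw [if_neg (exp_pos _).ne', log_exp, neg_neg] at hx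
  rw [hKJ x]
  exact abs_sub_sum_mul_exp_neg_succ_mul_le _ _ (fun j : Fin (N + 1) => (j : ℕ)) hx

/-- One-dimensional `L¹` kernel-approximation estimate:
`‖K - K_{N+1}‖_{L¹(ℝ)} ≤ 2 · max_{λ∈[0,1]} |h(λ) - P_N(λ)|`. -/
theorem statement5 (K J : ℝ → ℝ) (L : ℝ)
    (hK1 : Integrable K volume) (hKJ : ∀ x : ℝ, K x = J |x|)
    (hJc : ContinuousOn J (Ici 0))
    (hL : Tendsto (fun r => Real.exp r * J r) atTop (nhds L))
    (N : ℕ) (α : Fin (N + 1) → ℝ) (C : ℝ)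
    (hC : ∀ lam ∈ Icc (0:ℝ) 1,
      |(if lam = 0 then L else J (-Real.log lam) / lam)
        - ∑ j : Fin (N + 1), α j * (((j : ℝ) + 1) / 2) * lam ^ (j : ℕ)| ≤ C) :
    (∫ x : ℝ, |K x - ∑ j : Fin (N + 1),
        α j * (((j : ℝ) + 1) / 2) * Real.exp (-((j : ℝ) + 1) * |x|)|) ≤ 2 * C :=
  statement5_general K J L hKJ N α C hC
end
end

section
/- Let n = 3 and d_j = j^{−2} for j ∈ ℕ (so k_j(x) = (j²/(4π|x|)) e^{−j|x|}). Suppose K ∈ L¹(ℝ³) is radial with K(x) = J(|x|), J ∈ C((0,∞)), and both limits lim_{r→0} r J(r) and lim_{r→∞} r e^r J(r) exist; set h(λ) := −(log λ) J(−log λ)/λ for λ ∈ (0,1), h(0) := lim_{r→∞} r e^r J(r), h(1) := lim_{r→0} r J(r). Then for any N ∈ ℕ and any real constants α₁, …, α_{N+1}, ‖K − K_{N+1}‖_{L¹(ℝ³)} ≤ 4π · max_{λ∈[0,1]} |h(λ) − P_N(λ)|, where P_N(λ) := Σ_{j=0}^N α_{j+1} ((j+1)²/(4π)) λ^j and K_{N+1}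 := Σ_{j=1}^{N+1} α_j k_j. -/
open MeasureTheory Real Set Filter
open scoped ENNReal NNReal

noncomputable section

/-!
Under `λ = e^{-r}` each `k_j` satisfies `r² k_j(r) = r e^{-r} · j² λ^{j-1} / (4π)`, so
`r² (J(r) - K_{N+1}(r)) = r e^{-r} (h(λ) - P_N(λ))`, which is at most `C r e^{-r}` in absolute
value. In polar coordinates the `L¹` norm is `4π ∫₀^∞ r² |J - K_{N+1}| dr ≤ 4π C Γ(2) = 4π C`.
-/

theorem integral_fun_norm_euclideanSpace_fin_three (f : ℝ → ℝ) :
    ∫ x : EuclideanSpace ℝ (Fin 3), f ‖x‖ = 4 * π * ∫ r in Ioi (0:ℝ), r ^ 2 * f r := by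
  rw [integral_fun_norm_addHaar, finrank_euclideanSpace_fin, measureReal_def,
    EuclideanSpace.volume_ball_fin_three, ENNReal.toReal_mul, ENNReal.toReal_pow,
    ENNReal.toReal_ofReal zero_le_one, ENNReal.toReal_ofReal (by positivity)]
  simp only [nsmul_eq_mul, smul_eq_mul]
  ring

theorem setIntegral_Ioi_le_of_le_mul_self_mul_exp_neg {f : ℝ → ℝ} {C : ℝ}
    (hf₀ : ∀ r ∈ Ioi (0:ℝ), 0 ≤ f r) (hf : ∀ r ∈ Ioi (0:ℝ), f r ≤ C * (r * exp (-r))) :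
    ∫ r in Ioi (0:ℝ), f r ≤ C := by
  have hGamma : ∫ r in Ioi (0:ℝ), r * exp (-r) = 1 := by
    have h := Real.Gamma_eq_integral two_pos
    norm_num [Real.Gamma_two, mul_comm] at h
    exact h.symm
  have hint : IntegrableOn (fun r => r * exp (-r)) (Ioi (0:ℝ)) := by
    have h := Real.GammaIntegral_convergent two_pos
    norm_num [mul_comm] at h
    exact h
  calc ∫ r in Ioi (0:ℝ), f r ≤ ∫ r in Ioi (0:ℝ), C * (r * exp (-r)) :=
        integral_mono_of_nonneg (ae_restrict_of_forall_mem measurableSet_Ioi hf₀)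
          (hint.const_mul C) (ae_restrict_of_forall_mem measurableSet_Ioi hf)
    _ = C := by rw [integral_const_mul, hGamma, mul_one]

/-- `K_{N+1}(x) = radialApprox α ‖x‖`. -/
def radialApprox {N : ℕ} (α : Fin (N + 1) → ℝ) (r : ℝ) : ℝ :=
  ∑ j : Fin (N + 1), α j * (((j : ℝ) + 1) ^ 2 / (4 * π * r)) * exp (-((j : ℝ) + 1) * r)

/-- The polynomial `P_N`. -/
def approxPoly {N : ℕ} (α : Fin (N + 1) → ℝ) (lam : ℝ) : ℝ :=
  ∑ j : Fin (N + 1), α j * (((j : ℝ) + 1) ^ 2 / (4 * π)) * lam ^ (j : ℕ)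

theorem sq_mul_radialApprox {N : ℕ} (α : Fin (N + 1) → ℝ) (r : ℝ) :
    r ^ 2 * radialApprox α r = r * exp (-r) * approxPoly α (exp (-r)) := by
  rcases eq_or_ne r 0 with rfl | hr
  · simp
  simp only [radialApprox, approxPoly, Finset.mul_sum]
  refine Finset.sum_congr rfl fun j _ => ?_
  have hexp : exp (-((j : ℝ) + 1) * r) = exp (-r) * exp (-r) ^ (j : ℕ) := by
    rw [← exp_nat_mul, ← exp_add]
    ring_nf
  rw [hexp]
  field_simp

theorem sq_mul_sub_radialApprox {N : ℕ} (J : ℝ → ℝ) (α : Fin (N + 1) → ℝ) (r : ℝ) :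
    r ^ 2 * (J r - radialApprox α r) =
      r * exp (-r) * (-log (exp (-r)) * J (-log (exp (-r))) / exp (-r)
        - approxPoly α (exp (-r))) := by
  rw [mul_sub, sq_mul_radialApprox, mul_sub, log_exp, neg_neg]
  field_simp

theorem sq_mul_abs_sub_radialApprox_le {N : ℕ} {J : ℝ → ℝ} {α : Fin (N + 1) → ℝ}
    {L₀ Li C : ℝ}
    (hC : ∀ lam ∈ Icc (0:ℝ) 1,
      |(if lam = 0 then Li else if lam = 1 then L₀ else -log lam * J (-log lam) / lam)
        - approxPoly α lam| ≤ C)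
    {r : ℝ} (hr : 0 < r) :
    r ^ 2 * |J r - radialApprox α r| ≤ C * (r * exp (-r)) := by
  have hlam₀ : 0 < exp (-r) := exp_pos _
  have hlam₁ : exp (-r) < 1 := exp_lt_one_iff.mpr (neg_neg_of_pos hr)
  have hCr := hC (exp (-r)) ⟨hlam₀.le, hlam₁.le⟩
  rw [if_neg hlam₀.ne', if_neg hlam₁.ne] at hCr
  rw [← abs_of_nonneg (sq_nonneg r), ← abs_mul, sq_mul_sub_radialApprox, abs_mul,
    abs_of_pos (by positivity), mul_comm C]
  gcongr

theorem statement7_general (K : Eu 3 → ℝ) (J : ℝ → ℝ) (L₀ Li : ℝ)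
    (hKJ : ∀ x : Eu 3, x ≠ 0 → K x = J ‖x‖)
    (N : ℕ) (α : Fin (N + 1) → ℝ) (C : ℝ)
    (hC : ∀ lam ∈ Icc (0:ℝ) 1,
      |(if lam = 0 then Li else if lam = 1 then L₀ else
          -Real.log lam * J (-Real.log lam) / lam)
        - ∑ j : Fin (N + 1), α j * (((j : ℝ) + 1) ^ 2 / (4 * π)) * lam ^ (j : ℕ)| ≤ C) :
    (∫ x : Eu 3, |K x - ∑ j : Fin (N + 1),
        α j * (((j : ℝ) + 1) ^ 2 / (4 * π * ‖x‖)) * Real.exp (-((j : ℝ) + 1) * ‖x‖)|)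
      ≤ 4 * π * C := by
  have hK : ∀ᵐ x : Eu 3, |K x - radialApprox α ‖x‖| = |J ‖x‖ - radialApprox α ‖x‖| := by
    filter_upwards [compl_mem_ae_iff.2 (measure_singleton (0 : Eu 3))] with x hx
    rw [hKJ x hx]
  calc ∫ x : Eu 3, |K x - radialApprox α ‖x‖|
      = 4 * π * ∫ r in Ioi (0:ℝ), r ^ 2 * |J r - radialApprox α r| := by
        rw [integral_congr_ae hK]
        exact integral_fun_norm_euclideanSpace_fin_three fun r => |J r - radialApprox α r|
    _ ≤ 4 * π * C := by
        gcongr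
        exact setIntegral_Ioi_le_of_le_mul_self_mul_exp_neg (fun r _ => by positivity)
          fun r hr => sq_mul_abs_sub_radialApprox_le hC hr

/-- Three-dimensional `L¹` kernel-approximation estimate:
`‖K - K_{N+1}‖_{L¹(ℝ³)} ≤ 4π · max_{λ∈[0,1]} |h(λ) - P_N(λ)|`. -/
theorem statement7 (K : Eu 3 → ℝ) (J : ℝ → ℝ) (L₀ Li : ℝ)
    (hK1 : Integrable K volume) (hKJ : ∀ x : Eu 3, x ≠ 0 → K x = J ‖x‖)
    (hJc : ContinuousOn J (Ioi 0))
    (hL₀ : Tendsto (fun r => r * J r) (nhdsWithin 0 (Ioi 0)) (nhds L₀))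
    (hLi : Tendsto (fun r => r * Real.exp r * J r) atTop (nhds Li))
    (N : ℕ) (α : Fin (N + 1) → ℝ) (C : ℝ)
    (hC : ∀ lam ∈ Icc (0:ℝ) 1,
      |(if lam = 0 then Li else if lam = 1 then L₀ else
          -Real.log lam * J (-Real.log lam) / lam)
        - ∑ j : Fin (N + 1), α j * (((j : ℝ) + 1) ^ 2 / (4 * π)) * lam ^ (j : ℕ)| ≤ C) :
    (∫ x : Eu 3, |K x - ∑ j : Fin (N + 1),
        α j * (((j : ℝ) + 1) ^ 2 / (4 * π * ‖x‖)) * Real.exp (-((j : ℝ) + 1) * ‖x‖)|)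
      ≤ 4 * π * C :=
  statement7_general K J L₀ Li hKJ N α C hC
end
end

section
/- Let n = 1 and d_j = j^{−2} for j ∈ ℕ. Suppose K ∈ L¹(ℝ) is even with K(x) = J(|x|), J ∈ C([0,∞)), and the limit lim_{r→∞} e^r J(r) exists; set h(λ) := J(−log λ)/λ for λ ∈ (0,1] and h(0) := lim_{r→∞} e^r J(r). Then for any N ∈ ℕ, any real α₁, …, α_{N+1}, and every x ∈ ℝ, |K(x) − K_{N+1}(x)| ≤ e^{−|x|} · max_{λ∈[0,1]} |h(λ) − P_N(λ)|, where P_N(λ) := Σ_{j=0}^N α_{j+1} ((j+1)/2) λ^j and K_{N+1} := Σ_{j=1}^{N+1} α_j k_j. -/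
open MeasureTheory Real Set Filter
open scoped ENNReal NNReal

noncomputable section

/- With `λ = e^{-|x|} ∈ (0,1]` one has `K(x) = λ · h(λ)` and `k_{j+1}`-terms
`e^{-(j+1)|x|} = λ · λ^j`, so the error of the kernel approximation is `λ` times the error
of the polynomial approximation of `h` at `λ`. -/

theorem Real.exp_neg_natCast_add_one_mul (n : ℕ) (r : ℝ) :
    Real.exp (-((n : ℝ) + 1) * r) = Real.exp (-r) ^ (n + 1) := by
  rw [← Real.exp_nat_mul]
  push_cast
  ring_nf

theorem abs_mul_sub_sum_mul_pow_succ_le {ι : Type*} (s : Finset ι) (a : ι → ℝ) (e : ι → ℕ)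
    {lam g C : ℝ} (hlam : 0 ≤ lam) (h : |g - ∑ i ∈ s, a i * lam ^ e i| ≤ C) :
    |lam * g - ∑ i ∈ s, a i * lam ^ (e i + 1)| ≤ lam * C := by
  have hfactor : lam * g - ∑ i ∈ s, a i * lam ^ (e i + 1)
      = lam * (g - ∑ i ∈ s, a i * lam ^ e i) := by
    rw [mul_sub, Finset.mul_sum]
    exact congrArg _ (Finset.sum_congr rfl fun i _ => by ring)
  rw [hfactor, abs_mul, abs_of_nonneg hlam]
  exact mul_le_mul_of_nonneg_left h hlam

theorem statement8_general (K J : ℝ → ℝ) (L : ℝ)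
    (hKJ : ∀ x : ℝ, K x = J |x|)
    (N : ℕ) (α : Fin (N + 1) → ℝ) (C : ℝ)
    (hC : ∀ lam ∈ Icc (0:ℝ) 1,
      |(if lam = 0 then L else J (-Real.log lam) / lam)
        - ∑ j : Fin (N + 1), α j * (((j : ℝ) + 1) / 2) * lam ^ (j : ℕ)| ≤ C) :
    ∀ x : ℝ, |K x - ∑ j : Fin (N + 1),
        α j * (((j : ℝ) + 1) / 2) * Real.exp (-((j : ℝ) + 1) * |x|)|
      ≤ Real.exp (-|x|) * C := by
  intro x
  set lam := Real.exp (-|x|)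
  have hlam_pos : 0 < lam := Real.exp_pos _
  have hlam_le_one : lam ≤ 1 := Real.exp_le_one_iff.mpr (neg_nonpos.mpr (abs_nonneg x))
  have hh : (if lam = 0 then L else J (-Real.log lam) / lam) = K x / lam := by
    rw [if_neg hlam_pos.ne', Real.log_exp, neg_neg, hKJ]
  have hbound := abs_mul_sub_sum_mul_pow_succ_le Finset.univ _ (fun j : Fin (N + 1) => (j : ℕ))
    hlam_pos.le (hh ▸ hC lam ⟨hlam_pos.le, hlam_le_one⟩)
  rw [mul_div_cancel₀ _ hlam_pos.ne'] at hbound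
  convert hbound using 4 with j
  rw [Real.exp_neg_natCast_add_one_mul]

/-- One-dimensional pointwise kernel-approximation estimate:
`|K(x) - K_{N+1}(x)| ≤ e^{-|x|} · max_{λ∈[0,1]} |h(λ) - P_N(λ)|`. -/
theorem statement8 (K J : ℝ → ℝ) (L : ℝ)
    (hK1 : Integrable K volume) (hKJ : ∀ x : ℝ, K x = J |x|)
    (hJc : ContinuousOn J (Ici 0))
    (hL : Tendsto (fun r => Real.exp r * J r) atTop (nhds L))
    (N : ℕ) (α : Fin (N + 1) → ℝ) (C : ℝ)
    (hC : ∀ lam ∈ Icc (0:ℝ) 1,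
      |(if lam = 0 then L else J (-Real.log lam) / lam)
        - ∑ j : Fin (N + 1), α j * (((j : ℝ) + 1) / 2) * lam ^ (j : ℕ)| ≤ C) :
    ∀ x : ℝ, |K x - ∑ j : Fin (N + 1),
        α j * (((j : ℝ) + 1) / 2) * Real.exp (-((j : ℝ) + 1) * |x|)|
      ≤ Real.exp (-|x|) * C :=
  statement8_general K J L hKJ N α C hC
end
end

section
/- Let n = 2 and d_j = j^{−2} for j ∈ ℕ. Suppose K ∈ L¹(ℝ²) is radial with K(x) = J(|x|), J ∈ C¹([0,∞)), and there exists α > 1/2 such that lim_{r→∞} r^α e^r J'(r) exists; define A(r) := −(2r/π) ∫₀^∞ J'(r cosh s) ds, set h(λ) := A(−log λ)/λ for λ ∈ (0,1] and h(0) := 0. Then for any N ∈ ℕ, any real α₁, …, α_{N+1}, and every x ∈ ℝ² \ {0}, |K(x) − K_{N+1}(x)| ≤ M₀(|x|) · max_{λ∈[0,1]} |h(λ) − P_N(λ)|, where P_N(λ) := Σ_{j=0}^N α_{j+1} ((j+1)²/(2π)) λ^j and K_{N+1} := Σ_{j=1}^{N+1} α_j k_j. -/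
/-!
Write `r = |x|` and `λ(s) = e^{-r cosh s}`. Since `M₀((j+1)r) = ∫₀^∞ λ^{j+1} ds`, the
approximation is `K_{N+1}(x) = ∫₀^∞ λ P_N(λ) ds`, while the Abel-type inversion formula
`J(r) = ∫₀^∞ A(r cosh s) ds` gives `K(x) = ∫₀^∞ λ h(λ) ds`. Hence the error is at most
`∫₀^∞ λ ds · max |h - P_N| = M₀(r) · max |h - P_N|`.

For the inversion formula, `J'` decays like `e^{-r}`, so `J` has a limit at infinity, which is `0`
because `K` is integrable; thus `J(r) = -∫_r^∞ J'`. Substituting `u = ρ cosh t` twice turns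
`∫₀^∞ ∫₀^∞ r cosh s · g(r cosh s cosh t) dt ds` into `∫_r^∞ g(u) ∫_r^u w dw / √((w²-r²)(u²-w²)) du`,
and the inner integral equals `π/2`.
-/

open MeasureTheory Real Set Filter
open scoped ENNReal NNReal

noncomputable section

theorem MeasureTheory.Integrable.eq_zero_of_tendsto_cocompact {G F : Type*} [TopologicalSpace G]
    [AddGroup G] [IsTopologicalAddGroup G] [WeaklyLocallyCompactSpace G] [NoncompactSpace G] [MeasurableSpace G]
    [BorelSpace G] [NormedAddCommGroup F] {μ : Measure G}
    [μ.IsAddHaarMeasure] {f : G → F} (hf : Integrable f μ) {ℓ : F}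
    (hlim : Tendsto f (cocompact G) (nhds ℓ)) : ℓ = 0 := by
  refine (hf.integrableAtFilter _).eq_zero_of_tendsto (fun s hs => ?_) hlim
  obtain ⟨t, ht, hts⟩ := mem_cocompact.1 hs
  refine measure_mono_top hts ?_
  have := measure_univ_of_isAddLeftInvariant μ
  rw [← union_compl_self t] at this
  exact (ENNReal.add_eq_top.1 (top_unique (this ▸ measure_union_le t tᶜ))).resolve_left
    ht.measure_lt_top.ne

theorem isBigO_exp_neg_of_tendsto_rpow_mul_exp_mul {f : ℝ → ℝ} {a L : ℝ} (ha : 0 ≤ a)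
    (hL : Tendsto (fun r => r ^ a * exp r * f r) atTop (nhds L)) :
    f =O[atTop] fun r => exp (-1 * r) := by
  have hle : f =O[atTop] fun r => (r ^ a * exp r * f r) * exp (-1 * r) := by
    refine Asymptotics.IsBigO.of_bound 1 ?_
    filter_upwards [eventually_ge_atTop 1] with r hr
    have hcancel : r ^ a * exp r * f r * exp (-1 * r) = r ^ a * f r := by
      rw [neg_one_mul, exp_neg]; field_simp
    rw [hcancel, one_mul, norm_mul, norm_of_nonneg (rpow_nonneg (by linarith) a)]
    exact le_mul_of_one_le_left (norm_nonneg _) (one_le_rpow hr ha)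
  simpa using hle.trans ((hL.isBigO_one ℝ).mul (Asymptotics.isBigO_refl _ _))

theorem integrableOn_Ioi_deriv_of_tendsto {J : ℝ → ℝ} {a L ρ : ℝ} (ha : 0 ≤ a)
    (hJ : ContDiffOn ℝ 1 J (Ioi 0))
    (hL : Tendsto (fun r => r ^ a * exp r * deriv J r) atTop (nhds L)) (hρ : 0 < ρ) :
    IntegrableOn (deriv J) (Ioi ρ) :=
  integrable_of_isBigO_exp_neg one_pos
    ((hJ.continuousOn_deriv_of_isOpen isOpen_Ioi le_rfl).mono fun _ hx => hρ.trans_le hx)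
    (isBigO_exp_neg_of_tendsto_rpow_mul_exp_mul ha hL)

theorem tendsto_atTop_zero_of_integrable_comp_norm {E : Type*} [NormedAddCommGroup E]
    [ProperSpace E] [NoncompactSpace E] [MeasurableSpace E] [BorelSpace E] {μ : Measure E}
    [μ.IsAddHaarMeasure] {J : ℝ → ℝ} (hK : Integrable (fun x => J ‖x‖) μ)
    (hJ : DifferentiableOn ℝ J (Ioi 0)) (hJ' : IntegrableOn (deriv J) (Ioi 1)) :
    Tendsto J atTop (nhds 0) := by
  have hderiv : ∀ x ∈ Ioi (1 : ℝ), HasDerivAt J (deriv J x) x := fun x hx =>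
    (hJ.differentiableAt (Ioi_mem_nhds (one_pos.trans hx))).hasDerivAt
  have hlim := tendsto_limUnder_of_hasDerivAt_of_integrableOn_Ioi hderiv hJ'
  rwa [hK.eq_zero_of_tendsto_cocompact (hlim.comp tendsto_norm_cocompact_atTop)] at hlim

theorem image_mul_cosh_Ioi {ρ : ℝ} (hρ : 0 < ρ) :
    (fun t => ρ * cosh t) '' Ioi 0 = Ioi ρ := by
  ext u
  constructor
  · rintro ⟨t, ht, rfl⟩
    simpa using mul_lt_mul_of_pos_left (one_lt_cosh.2 ht.ne') hρ
  · intro hu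
    have h1 : 1 < u / ρ := (one_lt_div hρ).2 hu
    refine ⟨arcosh (u / ρ), arcosh_pos h1, ?_⟩
    simp only [cosh_arcosh h1.le]
    field_simp

theorem lintegral_comp_mul_cosh {ρ : ℝ} (hρ : 0 < ρ) (G : ℝ → ℝ≥0∞) :
    ∫⁻ t in Ioi 0, G (ρ * cosh t)
      = ∫⁻ u in Ioi ρ, ENNReal.ofReal (√(u ^ 2 - ρ ^ 2))⁻¹ * G u := by
  have hderiv : ∀ t ∈ Ioi (0 : ℝ),
      HasDerivWithinAt (fun t => ρ * cosh t) (ρ * sinh t) (Ioi 0) t :=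
    fun t _ => ((hasDerivAt_cosh t).const_mul ρ).hasDerivWithinAt
  have hinj : InjOn (fun t => ρ * cosh t) (Ioi 0) := fun a ha b hb hab =>
    cosh_injOn (mem_Ici_of_Ioi ha) (mem_Ici_of_Ioi hb) (mul_left_cancel₀ hρ.ne' hab)
  rw [← image_mul_cosh_Ioi hρ, lintegral_image_eq_lintegral_abs_deriv_mul measurableSet_Ioi
    hderiv hinj]
  refine setLIntegral_congr_fun measurableSet_Ioi fun t ht => ?_
  have hsinh : 0 < ρ * sinh t := mul_pos hρ (sinh_pos_iff.2 ht)
  have hsq : (ρ * cosh t) ^ 2 - ρ ^ 2 = (ρ * sinh t) ^ 2 := by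
    linear_combination ρ ^ 2 * cosh_sq' t
  rw [hsq, sqrt_sq hsinh.le, abs_of_pos hsinh, ← mul_assoc, ← ENNReal.ofReal_mul hsinh.le,
    mul_inv_cancel₀ hsinh.ne', ENNReal.ofReal_one, one_mul]

theorem lintegral_Ioo_div_sqrt_mul_sqrt {r u : ℝ} (hr : 0 < r) (hru : r < u) :
    ∫⁻ w in Ioo r u, ENNReal.ofReal (w / (√(w ^ 2 - r ^ 2) * √(u ^ 2 - w ^ 2)))
      = ENNReal.ofReal (π / 2) := by
  set f : ℝ → ℝ := fun w => w / (√(w ^ 2 - r ^ 2) * √(u ^ 2 - w ^ 2))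
  set R : ℝ := u ^ 2 - r ^ 2
  have hR : 0 < R := by nlinarith
  -- the substitution `w² = (u² + r²)/2 + (u² - r²)/2 · sin θ` yields this antiderivative
  set F : ℝ → ℝ := fun w => arcsin ((2 * w ^ 2 - u ^ 2 - r ^ 2) / R) / 2
  have hF : ∀ w ∈ Ioo r u, HasDerivAt F (f w) w := by
    intro w ⟨hrw, hwu⟩
    have hw : 0 < w := hr.trans hrw
    have h1 : 0 < w ^ 2 - r ^ 2 := by nlinarith
    have h2 : 0 < u ^ 2 - w ^ 2 := by nlinarith
    set g : ℝ := (2 * w ^ 2 - u ^ 2 - r ^ 2) / R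
    have hg : 1 - g ^ 2 = (2 * √(w ^ 2 - r ^ 2) * √(u ^ 2 - w ^ 2) / R) ^ 2 := by
      simp only [g, div_pow, mul_pow, sq_sqrt h1.le, sq_sqrt h2.le]
      field_simp
      ring
    have hg1 : g ≠ -1 := by
      simp only [g, ne_eq, div_eq_iff hR.ne']; nlinarith
    have hg2 : g ≠ 1 := by
      simp only [g, ne_eq, div_eq_iff hR.ne']; nlinarith
    have hd := ((hasDerivAt_arcsin hg1 hg2).comp w ((((hasDerivAt_pow 2 w).const_mul 2).sub_const
      (u ^ 2) |>.sub_const (r ^ 2)).div_const R)).div_const 2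
    refine hd.congr_deriv ?_
    rw [hg, sqrt_sq (by positivity)]
    simp only [f]
    field_simp
    ring
  have hFc : ContinuousOn F (Icc r u) := by fun_prop
  have hf_int : IntegrableOn f (Ioc r u) :=
    intervalIntegral.integrableOn_deriv_of_nonneg hFc hF fun w hw => by
      have : 0 < w := hr.trans hw.1
      positivity
  have hF_val : F u - F r = π / 2 := by
    simp only [F]
    rw [show (2 * u ^ 2 - u ^ 2 - r ^ 2) / R = 1 by rw [div_eq_iff hR.ne']; ring,
      show (2 * r ^ 2 - u ^ 2 - r ^ 2) / R = -1 by rw [div_eq_iff hR.ne']; ring,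
      arcsin_one, arcsin_neg_one]
    ring
  rw [setLIntegral_congr Ioo_ae_eq_Ioc, ← ofReal_integral_eq_lintegral_ofReal hf_int
    ((ae_restrict_iff' measurableSet_Ioc).2 (.of_forall fun w hw => ?_)),
    ← intervalIntegral.integral_of_le hru.le,
    intervalIntegral.integral_eq_sub_of_hasDerivAt_of_le hru.le hFc hF
      ((intervalIntegrable_iff_integrableOn_Ioc_of_le hru.le).2 hf_int), hF_val]
  have : 0 < w := hr.trans hw.1
  positivity

theorem lintegral_Ioi_lintegral_Ioi_swap (r : ℝ) {F : ℝ → ℝ → ℝ≥0∞}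
    (hF : Measurable (Function.uncurry F)) :
    ∫⁻ w in Ioi r, ∫⁻ u in Ioi w, F w u
      = ∫⁻ u in Ioi r, ∫⁻ w in Ioo r u, F w u := by
  set S : Set (ℝ × ℝ) := {p | r < p.1 ∧ p.1 < p.2}
  have hS : MeasurableSet S :=
    (measurableSet_lt measurable_const measurable_fst).inter
      (measurableSet_lt measurable_fst measurable_snd)
  calc ∫⁻ w in Ioi r, ∫⁻ u in Ioi w, F w u
      = ∫⁻ w, ∫⁻ u, S.indicator (Function.uncurry F) (w, u) := by
        rw [← lintegral_indicator measurableSet_Ioi]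
        congr 1 with w
        by_cases hw : r < w
        · rw [indicator_of_mem (mem_Ioi.2 hw), ← lintegral_indicator measurableSet_Ioi]
          congr 1 with u
          by_cases hu : w < u <;> simp [S, indicator, hw, hu]
        · simp [S, indicator, hw]
    _ = ∫⁻ u, ∫⁻ w, S.indicator (Function.uncurry F) (w, u) :=
        lintegral_lintegral_swap (hF.indicator hS).aemeasurable
    _ = ∫⁻ u in Ioi r, ∫⁻ w in Ioo r u, F w u := by
        rw [← lintegral_indicator measurableSet_Ioi]
        congr 1 with u
        by_cases hu : r < u
        · rw [indicator_of_mem (mem_Ioi.2 hu), ← lintegral_indicator measurableSet_Ioo]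
          congr 1 with w
        · have hzero (w : ℝ) : S.indicator (Function.uncurry F) (w, u) = 0 :=
            indicator_of_notMem (fun h => hu (h.1.trans h.2)) _
          simp [hzero, indicator_of_notMem (show u ∉ Ioi r from hu)]

theorem lintegral_mul_cosh_lintegral_comp_mul_cosh {r : ℝ} (hr : 0 < r) {g : ℝ → ℝ≥0∞}
    (hg : Measurable g) :
    ∫⁻ s in Ioi 0, ENNReal.ofReal (r * cosh s) * ∫⁻ t in Ioi 0, g (r * cosh s * cosh t)
      = ENNReal.ofReal (π / 2) * ∫⁻ u in Ioi r, g u := by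
  set k : ℝ → ℝ → ℝ≥0∞ := fun ρ u => ENNReal.ofReal (√(u ^ 2 - ρ ^ 2))⁻¹
  calc ∫⁻ s in Ioi 0, ENNReal.ofReal (r * cosh s) * ∫⁻ t in Ioi 0, g (r * cosh s * cosh t)
      = ∫⁻ s in Ioi 0,
          (fun w => ENNReal.ofReal w * ∫⁻ u in Ioi w, k w u * g u) (r * cosh s) :=
        setLIntegral_congr_fun measurableSet_Ioi fun s _ => by
          rw [lintegral_comp_mul_cosh (by positivity)]
    _ = ∫⁻ w in Ioi r, k r w * (ENNReal.ofReal w * ∫⁻ u in Ioi w, k w u * g u) :=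
        lintegral_comp_mul_cosh hr fun w => ENNReal.ofReal w * ∫⁻ u in Ioi w, k w u * g u
    _ = ∫⁻ w in Ioi r, ∫⁻ u in Ioi w,
          ENNReal.ofReal (w / (√(w ^ 2 - r ^ 2) * √(u ^ 2 - w ^ 2))) * g u := by
        refine setLIntegral_congr_fun measurableSet_Ioi fun w hw => ?_
        have hw0 : 0 < w := hr.trans hw
        rw [← mul_assoc, ← lintegral_const_mul _ (by fun_prop)]
        refine lintegral_congr fun u => ?_
        rw [← mul_assoc, ← ENNReal.ofReal_mul (by positivity), ← ENNReal.ofReal_mul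
          (by positivity), mul_comm _ w, mul_assoc, ← mul_inv, ← div_eq_mul_inv]
    _ = ∫⁻ u in Ioi r, ∫⁻ w in Ioo r u,
          ENNReal.ofReal (w / (√(w ^ 2 - r ^ 2) * √(u ^ 2 - w ^ 2))) * g u :=
        lintegral_Ioi_lintegral_Ioi_swap r (by fun_prop)
    _ = ∫⁻ u in Ioi r, ENNReal.ofReal (π / 2) * g u := by
        refine setLIntegral_congr_fun measurableSet_Ioi fun u hu => ?_
        rw [lintegral_mul_const _ (by fun_prop), lintegral_Ioo_div_sqrt_mul_sqrt hr hu]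
    _ = ENNReal.ofReal (π / 2) * ∫⁻ u in Ioi r, g u := lintegral_const_mul _ hg

theorem map_mul_cosh_mul_cosh {r : ℝ} (hr : 0 < r) :
    (((volume.restrict (Ioi 0)).withDensity fun s => ENNReal.ofReal (r * cosh s)).prod
        (volume.restrict (Ioi 0))).map (fun p : ℝ × ℝ => r * cosh p.1 * cosh p.2)
      = ENNReal.ofReal (π / 2) • volume.restrict (Ioi r) := by
  refine Measure.ext_of_lintegral _ fun g hg => ?_
  rw [lintegral_map hg (by fun_prop), lintegral_prod _ (by fun_prop),
    lintegral_withDensity_eq_lintegral_mul _ (by fun_prop) ?_, lintegral_smul_measure]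
  · exact lintegral_mul_cosh_lintegral_comp_mul_cosh hr hg
  · exact (hg.comp (by fun_prop : Measurable fun p : ℝ × ℝ => r * cosh p.1 * cosh p.2))
      |>.lintegral_prod_right'

theorem integral_mul_cosh_integral_comp_mul_cosh {r : ℝ} (hr : 0 < r) {f : ℝ → ℝ}
    (hf : IntegrableOn f (Ioi r)) :
    IntegrableOn (fun s => r * cosh s * ∫ t in Ioi 0, f (r * cosh s * cosh t)) (Ioi 0) ∧
      ∫ s in Ioi 0, r * cosh s * ∫ t in Ioi 0, f (r * cosh s * cosh t)
        = π / 2 * ∫ u in Ioi r, f u := by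
  set ρ : ℝ → ℝ≥0 := fun s => (r * cosh s).toNNReal
  have hρ : Measurable ρ := by fun_prop
  have hρ_smul (s y : ℝ) : ρ s • y = r * cosh s * y := by
    rw [NNReal.smul_def, Real.coe_toNNReal _ (by positivity), smul_eq_mul]
  set ν := ((volume.restrict (Ioi 0)).withDensity fun s => (ρ s : ℝ≥0∞)).prod
    (volume.restrict (Ioi (0 : ℝ)))
  set Φ : ℝ × ℝ → ℝ := fun p => r * cosh p.1 * cosh p.2
  have hmap : ν.map Φ = ENNReal.ofReal (π / 2) • volume.restrict (Ioi r) :=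
    map_mul_cosh_mul_cosh hr
  have hΦ : AEMeasurable Φ ν := by fun_prop
  have hf_map : AEStronglyMeasurable f (ν.map Φ) := by
    rw [hmap]; exact hf.1.smul_measure _
  have hfΦ : Integrable (f ∘ Φ) ν := (integrable_map_measure hf_map hΦ).1 <| by
    rw [hmap]; exact hf.smul_measure ENNReal.ofReal_ne_top
  constructor
  · exact ((integrable_withDensity_iff_integrable_smul hρ).1 hfΦ.integral_prod_left).congr
      (.of_forall fun s => hρ_smul s _)
  · calc ∫ s in Ioi 0, r * cosh s * ∫ t in Ioi 0, f (r * cosh s * cosh t)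
        = ∫ s in Ioi 0, ρ s • ∫ t in Ioi 0, f (Φ (s, t)) := by simp only [hρ_smul]; rfl
      _ = ∫ p, f (Φ p) ∂ν := by
          rw [← integral_withDensity_eq_integral_smul hρ]
          exact (integral_prod _ hfΦ).symm
      _ = ∫ u, f u ∂(ν.map Φ) := (integral_map hΦ hf_map).symm
      _ = π / 2 * ∫ u in Ioi r, f u := by
          rw [hmap, integral_smul_measure, ENNReal.toReal_ofReal (by positivity), smul_eq_mul]

theorem integral_abelA_comp_mul_cosh {J : ℝ → ℝ} {r : ℝ} (hr : 0 < r)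
    (hJ : DifferentiableOn ℝ J (Ioi 0)) (hJ' : IntegrableOn (deriv J) (Ioi r))
    (hlim : Tendsto J atTop (nhds 0)) :
    IntegrableOn (fun s => abelA J (r * cosh s)) (Ioi 0) ∧
      ∫ s in Ioi 0, abelA J (r * cosh s) = J r := by
  have hA : (fun s => abelA J (r * cosh s))
      = fun s => -(2 / π) * (r * cosh s * ∫ t in Ioi 0, deriv J (r * cosh s * cosh t)) := by
    ext s; simp only [abelA]; ring
  have hJ_at : ∀ x ∈ Ici r, HasDerivAt J (deriv J x) x := fun x hx =>
    (hJ.differentiableAt (Ioi_mem_nhds (hr.trans_le hx))).hasDerivAt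
  have hFTC : ∫ u in Ioi r, deriv J u = 0 - J r :=
    integral_Ioi_of_hasDerivAt_of_tendsto (hJ_at r self_mem_Ici).continuousAt.continuousWithinAt
      (fun x hx => hJ_at x (mem_Ici_of_Ioi hx)) hJ' hlim
  obtain ⟨hint, hval⟩ := integral_mul_cosh_integral_comp_mul_cosh hr hJ'
  rw [hA]
  refine ⟨hint.const_mul _, ?_⟩
  rw [integral_const_mul, hval, hFTC]
  field_simp
  ring

theorem besselM_zero_eq_integral (m : ℝ) :
    besselM 0 m = ∫ s in Ioi 0, exp (-(m * cosh s)) := by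
  simp [besselM]

theorem integrableOn_exp_neg_mul_cosh {m : ℝ} (hm : 0 < m) :
    IntegrableOn (fun s => exp (-(m * cosh s))) (Ioi 0) := by
  refine (exp_neg_integrableOn_Ioi 0 hm).mono' (by fun_prop) <|
    (ae_restrict_iff' measurableSet_Ioi).2 (.of_forall fun s hs => ?_)
  have hs_lt : s < cosh s := (self_lt_sinh_iff.2 hs).trans (sinh_lt_cosh s)
  rw [norm_of_nonneg (exp_pos _).le, exp_le_exp, neg_mul, neg_le_neg_iff]
  exact (mul_lt_mul_of_pos_left hs_lt hm).le

theorem sum_mul_besselM_eq_integral {ι : Type*} (t : Finset ι) (β : ι → ℝ) (n : ι → ℕ)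
    {r : ℝ} (hr : 0 < r) :
    IntegrableOn (fun s => exp (-(r * cosh s)) * ∑ i ∈ t, β i * exp (-(r * cosh s)) ^ n i)
        (Ioi 0) ∧
      ∑ i ∈ t, β i * besselM 0 (((n i : ℝ) + 1) * r)
        = ∫ s in Ioi 0, exp (-(r * cosh s)) * ∑ i ∈ t, β i * exp (-(r * cosh s)) ^ n i := by
  have hterm (i : ι) (s : ℝ) : exp (-(r * cosh s)) * (β i * exp (-(r * cosh s)) ^ n i)
      = β i * exp (-(((n i : ℝ) + 1) * r * cosh s)) := by
    rw [← exp_nat_mul, mul_left_comm, ← exp_add]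
    ring_nf
  have hint (i : ι) :
      IntegrableOn (fun s => β i * exp (-(((n i : ℝ) + 1) * r * cosh s))) (Ioi 0) :=
    (integrableOn_exp_neg_mul_cosh (by positivity)).const_mul _
  simp only [Finset.mul_sum, hterm]
  refine ⟨integrable_finsetSum _ fun i _ => hint i, ?_⟩
  rw [integral_finsetSum _ fun i _ => hint i]
  simp only [besselM_zero_eq_integral, integral_const_mul]

/-- Two-dimensional pointwise kernel-approximation estimate:
`|K(x) - K_{N+1}(x)| ≤ M₀(|x|) · max_{λ∈[0,1]} |h(λ) - P_N(λ)|` for `x ≠ 0`. -/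
theorem statement9 (K : Eu 2 → ℝ) (J : ℝ → ℝ) (a L : ℝ) (ha : 1 / 2 < a)
    (hK1 : Integrable K volume) (hKJ : ∀ x : Eu 2, K x = J ‖x‖)
    (hJc : ContDiffOn ℝ 1 J (Ici 0))
    (hL : Tendsto (fun r => r ^ a * Real.exp r * deriv J r) atTop (nhds L))
    (N : ℕ) (α : Fin (N + 1) → ℝ) (C : ℝ)
    (hC : ∀ lam ∈ Icc (0:ℝ) 1,
      |(if lam = 0 then 0 else abelA J (-Real.log lam) / lam)
        - ∑ j : Fin (N + 1), α j * (((j : ℝ) + 1) ^ 2 / (2 * π)) * lam ^ (j : ℕ)| ≤ C) :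
    ∀ x : Eu 2, x ≠ 0 →
      |K x - ∑ j : Fin (N + 1),
          α j * (((j : ℝ) + 1) ^ 2 / (2 * π)) * besselM 0 (((j : ℝ) + 1) * ‖x‖)|
        ≤ besselM 0 ‖x‖ * C := by
  intro x hx
  have hJ : DifferentiableOn ℝ J (Ioi 0) :=
    (hJc.differentiableOn one_ne_zero).mono Ioi_subset_Ici_self
  have hJ' (ρ : ℝ) (hρ : 0 < ρ) : IntegrableOn (deriv J) (Ioi ρ) :=
    integrableOn_Ioi_deriv_of_tendsto (by linarith) (hJc.mono Ioi_subset_Ici_self) hL hρ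
  have hlim : Tendsto J atTop (nhds 0) :=
    tendsto_atTop_zero_of_integrable_comp_norm (hK1.congr (.of_forall hKJ)) hJ (hJ' 1 one_pos)
  set r := ‖x‖
  have hr : 0 < r := norm_pos_iff.2 hx
  obtain ⟨hA_int, hA_val⟩ := integral_abelA_comp_mul_cosh hr hJ (hJ' r hr) hlim
  obtain ⟨hP_int, hP_val⟩ := sum_mul_besselM_eq_integral Finset.univ
    (fun j : Fin (N + 1) => α j * (((j : ℝ) + 1) ^ 2 / (2 * π))) (fun j => j) hr
  have hbound (s : ℝ) : ‖abelA J (r * cosh s) - exp (-(r * cosh s)) * ∑ j : Fin (N + 1),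
      α j * (((j : ℝ) + 1) ^ 2 / (2 * π)) * exp (-(r * cosh s)) ^ (j : ℕ)‖
        ≤ C * exp (-(r * cosh s)) := by
    have hlam : 0 < exp (-(r * cosh s)) := exp_pos _
    have h := hC _ ⟨hlam.le, exp_le_one_iff.2 (by nlinarith [cosh_pos s])⟩
    rw [if_neg hlam.ne', log_exp, neg_neg] at h
    rw [← mul_div_cancel₀ (abelA J (r * cosh s)) hlam.ne', ← mul_sub, norm_mul,
      norm_of_nonneg hlam.le, mul_comm C]
    exact mul_le_mul_of_nonneg_left h hlam.le
  rw [hKJ, ← hA_val, hP_val, ← integral_sub hA_int hP_int, ← norm_eq_abs]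
  calc _ ≤ ∫ s in Ioi 0, C * exp (-(r * cosh s)) :=
        norm_integral_le_of_norm_le ((integrableOn_exp_neg_mul_cosh hr).const_mul C)
          (.of_forall hbound)
    _ = besselM 0 r * C := by rw [integral_const_mul, besselM_zero_eq_integral, mul_comm]
end
end

section
/- Let n = 3 and d_j = j^{−2} for j ∈ ℕ. Suppose K ∈ L¹(ℝ³) is radial with K(x) = J(|x|), J ∈ C((0,∞)), and both limits lim_{r→0} r J(r) and lim_{r→∞} r e^r J(r) exist; set h(λ) := −(log λ) J(−log λ)/λ for λ ∈ (0,1), h(0) := lim_{r→∞} r e^r J(r), h(1) := lim_{r→0} r J(r). Then for any N ∈ ℕ, any real α₁, …, α_{N+1}, and every x ∈ ℝ³ \ {0}, |K(x) − K_{N+1}(x)| ≤ (e^{−|x|}/|x|) · max_{λ∈[0,1]} |h(λ) − P_N(λ)|, where P_N(λ) := Σ_{j=0}^N α_{j+1} ((j+1)²/(4π)) λ^j and K_{N+1} := Σ_{j=1}^{N+1} α_j k_j. -/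
open MeasureTheory Real Set Filter
open scoped ENNReal NNReal

noncomputable section

/-! With `λ = e^{-|x|}` one has `k_j(x) = (e^{-|x|}/|x|) (j²/4π) λ^{j-1}` and
`K(x) = (e^{-|x|}/|x|) h(λ)`, so `K - K_{N+1} = (e^{-|x|}/|x|) (h - P_N)(λ)` and the bound is
the maximum evaluated at this single point. -/

theorem exp_neg_succ_mul (j : ℕ) (r : ℝ) :
    Real.exp (-((j : ℝ) + 1) * r) = Real.exp (-r) * Real.exp (-r) ^ j := by
  rw [← Real.exp_nat_mul, ← Real.exp_add]
  ring_nf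

theorem sum_yukawa_eq_exp_div_mul_poly {N : ℕ} (α : Fin (N + 1) → ℝ) {r : ℝ} (hr : r ≠ 0) :
    ∑ j : Fin (N + 1), α j * (((j : ℝ) + 1) ^ 2 / (4 * π * r)) * Real.exp (-((j : ℝ) + 1) * r)
      = Real.exp (-r) / r *
          ∑ j : Fin (N + 1), α j * (((j : ℝ) + 1) ^ 2 / (4 * π)) * Real.exp (-r) ^ (j : ℕ) := by
  rw [Finset.mul_sum]
  refine Finset.sum_congr rfl fun j _ => ?_
  rw [exp_neg_succ_mul]
  field_simp

theorem statement10_general (K : Eu 3 → ℝ) (J : ℝ → ℝ) (L₀ Li : ℝ)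
    (hKJ : ∀ x : Eu 3, x ≠ 0 → K x = J ‖x‖)
    (N : ℕ) (α : Fin (N + 1) → ℝ) (C : ℝ)
    (hC : ∀ lam ∈ Icc (0:ℝ) 1,
      |(if lam = 0 then Li else if lam = 1 then L₀ else
          -Real.log lam * J (-Real.log lam) / lam)
        - ∑ j : Fin (N + 1), α j * (((j : ℝ) + 1) ^ 2 / (4 * π)) * lam ^ (j : ℕ)| ≤ C) :
    ∀ x : Eu 3, x ≠ 0 →
      |K x - ∑ j : Fin (N + 1),
          α j * (((j : ℝ) + 1) ^ 2 / (4 * π * ‖x‖)) * Real.exp (-((j : ℝ) + 1) * ‖x‖)|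
        ≤ Real.exp (-‖x‖) / ‖x‖ * C := by
  intro x hx
  set r := ‖x‖ with hr_def
  have hr : 0 < r := norm_pos_iff.mpr hx
  have hlam_pos : 0 < Real.exp (-r) := Real.exp_pos _
  have hlam_lt_one : Real.exp (-r) < 1 := Real.exp_lt_one_iff.mpr (neg_neg_of_pos hr)
  have hC_at := hC (Real.exp (-r)) ⟨hlam_pos.le, hlam_lt_one.le⟩
  rw [if_neg hlam_pos.ne', if_neg hlam_lt_one.ne, Real.log_exp, neg_neg] at hC_at
  have hK : K x = Real.exp (-r) / r * (r * J r / Real.exp (-r)) := by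
    rw [hKJ x hx, ← hr_def]
    field_simp
  calc _ = |Real.exp (-r) / r| * |r * J r / Real.exp (-r) -
          ∑ j : Fin (N + 1), α j * (((j : ℝ) + 1) ^ 2 / (4 * π)) * Real.exp (-r) ^ (j : ℕ)| := by
        rw [hK, sum_yukawa_eq_exp_div_mul_poly α hr.ne', ← mul_sub, abs_mul]
    _ ≤ Real.exp (-r) / r * C := by
        rw [abs_of_pos (by positivity)]
        gcongr

/-- Three-dimensional pointwise kernel-approximation estimate:
`|K(x) - K_{N+1}(x)| ≤ (e^{-|x|}/|x|) · max_{λ∈[0,1]} |h(λ) - P_N(λ)|` for `x ≠ 0`. -/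
theorem statement10 (K : Eu 3 → ℝ) (J : ℝ → ℝ) (L₀ Li : ℝ)
    (hK1 : Integrable K volume) (hKJ : ∀ x : Eu 3, x ≠ 0 → K x = J ‖x‖)
    (hJc : ContinuousOn J (Ioi 0))
    (hL₀ : Tendsto (fun r => r * J r) (nhdsWithin 0 (Ioi 0)) (nhds L₀))
    (hLi : Tendsto (fun r => r * Real.exp r * J r) atTop (nhds Li))
    (N : ℕ) (α : Fin (N + 1) → ℝ) (C : ℝ)
    (hC : ∀ lam ∈ Icc (0:ℝ) 1,
      |(if lam = 0 then Li else if lam = 1 then L₀ else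
          -Real.log lam * J (-Real.log lam) / lam)
        - ∑ j : Fin (N + 1), α j * (((j : ℝ) + 1) ^ 2 / (4 * π)) * lam ^ (j : ℕ)| ≤ C) :
    ∀ x : Eu 3, x ≠ 0 →
      |K x - ∑ j : Fin (N + 1),
          α j * (((j : ℝ) + 1) ^ 2 / (4 * π * ‖x‖)) * Real.exp (-((j : ℝ) + 1) * ‖x‖)|
        ≤ Real.exp (-‖x‖) / ‖x‖ * C :=
  statement10_general K J L₀ Li hKJ N α C hC
end
end

section
/- Let n ≥ 1 and let H(t,x) := (4πt)^{−n/2} exp(−|x|²/(4t)) be the heat kernel on ℝⁿ. For every γ ∈ (0,1) there exists a constant C = C(γ, n) > 0 such that for every t > 0, every index j ∈ {1, …, n}, and every φ ∈ L^∞(ℝⁿ), the Hölder seminorm of (∂H/∂x_j)(t,·)*φ satisfies sup_{x≠z} |((∂H/∂x_j)(t)*φ)(x) − ((∂H/∂x_j)(t)*φ)(z)| / |x−z|^γ ≤ C t^{−(1+γ)/2} ‖φ‖_{L^∞}. -/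
open MeasureTheory Real Set Filter
open scoped ENNReal NNReal

noncomputable section

/-!
With `b = 1/(4t)`, the directional derivative of the heat kernel is
`∂ⱼH(t, w) = -2b (b/π)^{n/2} ⟨eⱼ, w⟩ e^{-b|w|²}`. Both this kernel and its gradient are dominated
by Gaussians of rate `b/2`, so convolving with `φ ∈ L^∞` gives a function bounded by
`C ‖φ‖_∞ / √t` and, by the mean value theorem, Lipschitz with constant `C ‖φ‖_∞ / t` on scales
`|x - z| ≤ √t`. Together, the difference is at most `C ‖φ‖_∞ t^{-1/2} min(1, |x - z|/√t)`, and
`min(1, r) ≤ r^γ` gives the Hölder bound.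
-/

open scoped RealInnerProductSpace

lemma min_one_le_rpow {r γ : ℝ} (hr : 0 ≤ r) (hγ0 : 0 ≤ γ) (hγ1 : γ ≤ 1) : min 1 r ≤ r ^ γ := by
  rcases le_total r 1 with hr1 | hr1
  · rw [min_eq_right hr1]
    simpa using rpow_le_rpow_of_exponent_ge' hr hr1 hγ0 hγ1
  · rw [min_eq_left hr1]
    exact one_le_rpow hr1 hγ0

lemma inv_sqrt_mul_sqrt_rpow {t : ℝ} (ht : 0 < t) (γ : ℝ) :
    (√t * √t ^ γ)⁻¹ = t ^ (-(1 + γ) / 2) := by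
  rw [sqrt_eq_rpow, ← rpow_mul ht.le, ← rpow_add ht, ← rpow_neg ht.le]
  ring_nf

lemma sqrt_inv_four_mul (t : ℝ) : √((4 * t)⁻¹) = (2 * √t)⁻¹ := by
  rw [sqrt_inv, sqrt_mul zero_le_four, show (4 : ℝ) = 2 ^ 2 by norm_num, sqrt_sq zero_le_two]

lemma le_exp_sq_div_two (x : ℝ) : x ≤ exp (x ^ 2 / 2) := by
  nlinarith [add_one_le_exp (x ^ 2 / 2), sq_nonneg (x - 1)]

lemma exp_neg_mul_sq_norm_le {E : Type*} [SeminormedAddCommGroup E] {b : ℝ} (hb : 0 ≤ b)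
    (u w : E) : exp (-b * ‖u‖ ^ 2) ≤ exp (b * ‖u - w‖ ^ 2) * exp (-(b / 2) * ‖w‖ ^ 2) := by
  rw [← exp_add, exp_le_exp]
  have h : ‖w‖ ≤ ‖u‖ + ‖u - w‖ := by simpa using norm_sub_le u (u - w)
  have h2 : ‖w‖ ^ 2 ≤ 2 * ‖u‖ ^ 2 + 2 * ‖u - w‖ ^ 2 := by
    nlinarith [norm_nonneg w, sq_nonneg (‖u‖ - ‖u - w‖)]
  nlinarith [mul_le_mul_of_nonneg_left h2 hb]

section Pointwise

variable {E : Type*} [NormedAddCommGroup E] [InnerProductSpace ℝ E] {b : ℝ}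

lemma hasFDerivAt_exp_neg_mul_sq_norm (b : ℝ) (w : E) :
    HasFDerivAt (fun v : E => exp (-b * ‖v‖ ^ 2))
      ((-2 * b * exp (-b * ‖w‖ ^ 2)) • innerSL ℝ w) w := by
  convert ((hasStrictFDerivAt_norm_sq w).hasFDerivAt.const_mul (-b)).exp using 1
  ext v
  simp only [neg_mul, neg_smul, neg_apply, smul_apply, coe_innerSL_apply, smul_eq_mul, smul_neg,
    nsmul_eq_mul, Nat.cast_ofNat, neg_inj]
  ring

/-- The spatial derivative of a Gaussian in the direction `e`, up to the factor `-2b`. -/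
def innerGaussian (b : ℝ) (e w : E) : ℝ := ⟪e, w⟫ * exp (-b * ‖w‖ ^ 2)

lemma hasFDerivAt_innerGaussian (b : ℝ) (e w : E) :
    HasFDerivAt (innerGaussian b e)
      (exp (-b * ‖w‖ ^ 2) • (innerSL ℝ e - (2 * b * ⟪e, w⟫) • innerSL ℝ w)) w := by
  refine ((innerSL ℝ e).hasFDerivAt.mul (hasFDerivAt_exp_neg_mul_sq_norm b w)).congr_fderiv ?_
  ext v
  simp only [coe_innerSL_apply, neg_mul, neg_smul, smul_neg, add_apply, neg_apply, smul_apply,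
    smul_eq_mul, sub_apply]
  ring

lemma continuous_innerGaussian (b : ℝ) (e : E) : Continuous (innerGaussian b e) :=
  continuous_iff_continuousAt.2 fun w =>
    (hasFDerivAt_innerGaussian b e w).differentiableAt.continuousAt

lemma abs_innerGaussian_le (hb : 0 < b) {e : E} (he : ‖e‖ ≤ 1) (w : E) :
    |innerGaussian b e w| ≤ exp (-(b / 2) * ‖w‖ ^ 2) / √b := by
  have hinner : |⟪e, w⟫| ≤ ‖w‖ :=
    (abs_real_inner_le_norm e w).trans (mul_le_of_le_one_left (norm_nonneg w) he)
  have hsqrt : √b * ‖w‖ ≤ exp (b / 2 * ‖w‖ ^ 2) := by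
    convert le_exp_sq_div_two (√b * ‖w‖) using 2
    rw [mul_pow, sq_sqrt hb.le]
    ring
  have hsplit : exp (-b * ‖w‖ ^ 2) = exp (-(b / 2) * ‖w‖ ^ 2) * exp (-(b / 2 * ‖w‖ ^ 2)) := by
    rw [← exp_add]; ring_nf
  rw [innerGaussian, abs_mul, abs_of_pos (exp_pos _), le_div_iff₀ (sqrt_pos.2 hb), hsplit]
  calc |⟪e, w⟫| * (exp (-(b / 2) * ‖w‖ ^ 2) * exp (-(b / 2 * ‖w‖ ^ 2))) * √b
      ≤ exp (-(b / 2) * ‖w‖ ^ 2) * ((√b * ‖w‖) * exp (-(b / 2 * ‖w‖ ^ 2))) := by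
        rw [show |⟪e, w⟫| * (exp (-(b / 2) * ‖w‖ ^ 2) * exp (-(b / 2 * ‖w‖ ^ 2))) * √b =
          exp (-(b / 2) * ‖w‖ ^ 2) * ((√b * |⟪e, w⟫|) * exp (-(b / 2 * ‖w‖ ^ 2))) by ring]
        gcongr
    _ ≤ exp (-(b / 2) * ‖w‖ ^ 2) * (exp (b / 2 * ‖w‖ ^ 2) * exp (-(b / 2 * ‖w‖ ^ 2))) := by
        gcongr
    _ = exp (-(b / 2) * ‖w‖ ^ 2) := by rw [← exp_add, add_neg_cancel, exp_zero, mul_one]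

lemma norm_fderiv_innerGaussian_le (hb : 0 ≤ b) {e : E} (he : ‖e‖ ≤ 1) (w : E) :
    ‖fderiv ℝ (innerGaussian b e) w‖ ≤ 4 * exp (-(b / 2) * ‖w‖ ^ 2) := by
  rw [(hasFDerivAt_innerGaussian b e w).fderiv]
  have hinner : |⟪e, w⟫| ≤ ‖w‖ :=
    (abs_real_inner_le_norm e w).trans (mul_le_of_le_one_left (norm_nonneg w) he)
  have hpoly : 1 + 2 * b * ‖w‖ ^ 2 ≤ 4 * exp (b / 2 * ‖w‖ ^ 2) := by
    nlinarith [add_one_le_exp (b / 2 * ‖w‖ ^ 2)]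
  have hsplit : exp (-(b / 2) * ‖w‖ ^ 2) = exp (-b * ‖w‖ ^ 2) * exp (b / 2 * ‖w‖ ^ 2) := by
    rw [← exp_add]; ring_nf
  calc ‖exp (-b * ‖w‖ ^ 2) • (innerSL ℝ e - (2 * b * ⟪e, w⟫) • innerSL ℝ w)‖
      ≤ exp (-b * ‖w‖ ^ 2) * (‖e‖ + 2 * b * |⟪e, w⟫| * ‖w‖) := by
        rw [norm_smul, norm_of_nonneg (exp_pos _).le]
        gcongr
        refine (norm_sub_le _ _).trans ?_
        rw [norm_smul, innerSL_apply_norm, innerSL_apply_norm, norm_eq_abs, abs_mul,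
          abs_mul, abs_of_nonneg hb, abs_two]
    _ ≤ exp (-b * ‖w‖ ^ 2) * (1 + 2 * b * ‖w‖ ^ 2) := by
        have := mul_le_mul_of_nonneg_left hinner (by positivity : 0 ≤ 2 * b * ‖w‖)
        exact mul_le_mul_of_nonneg_left (by nlinarith) (exp_pos _).le
    _ ≤ 4 * exp (-(b / 2) * ‖w‖ ^ 2) := by
        rw [hsplit]
        nlinarith [exp_pos (-b * ‖w‖ ^ 2)]

lemma abs_innerGaussian_add_sub_le (hb : 0 ≤ b) {e : E} (he : ‖e‖ ≤ 1) (w h : E) :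
    |innerGaussian b e (w + h) - innerGaussian b e w| ≤
      4 * exp (b / 2 * ‖h‖ ^ 2) * ‖h‖ * exp (-(b / 4) * ‖w‖ ^ 2) := by
  have hbound : ∀ u ∈ segment ℝ w (w + h), ‖fderiv ℝ (innerGaussian b e) u‖ ≤
      4 * exp (b / 2 * ‖h‖ ^ 2) * exp (-(b / 4) * ‖w‖ ^ 2) := by
    intro u hu
    have hdist : ‖u - w‖ ≤ ‖h‖ := by
      simpa using norm_sub_le_of_mem_segment hu
    calc ‖fderiv ℝ (innerGaussian b e) u‖ ≤ 4 * exp (-(b / 2) * ‖u‖ ^ 2) :=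
          norm_fderiv_innerGaussian_le hb he u
      _ ≤ 4 * (exp (b / 2 * ‖u - w‖ ^ 2) * exp (-(b / 2 / 2) * ‖w‖ ^ 2)) := by
          gcongr; exact exp_neg_mul_sq_norm_le (by positivity) u w
      _ ≤ 4 * exp (b / 2 * ‖h‖ ^ 2) * exp (-(b / 4) * ‖w‖ ^ 2) := by
          rw [div_div, mul_assoc]; norm_num; gcongr
  rw [mul_right_comm]
  simpa [← norm_eq_abs] using (convex_segment w (w + h)).norm_image_sub_le_of_norm_fderiv_le
    (fun u _ => (hasFDerivAt_innerGaussian b e u).differentiableAt) hbound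
    (left_mem_segment ℝ _ _) (right_mem_segment ℝ _ _)

end Pointwise

section Integral

lemma MeasureTheory.MemLp.ae_abs_le_eLpNorm_top {α : Type*} [MeasurableSpace α]
    {μ : Measure α} {φ : α → ℝ} (hφ : MemLp φ ⊤ μ) :
    ∀ᵐ y ∂μ, |φ y| ≤ (eLpNorm φ ⊤ μ).toReal := by
  filter_upwards [ae_le_eLpNormEssSup (μ := μ) (f := φ)] with y hy
  rw [← eLpNorm_exponent_top] at hy
  simpa [← norm_eq_abs] using ENNReal.toReal_mono hφ.eLpNorm_ne_top hy

lemma abs_integral_mul_le_of_abs_le {α : Type*} [MeasurableSpace α] {μ : Measure α}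
    {K g φ : α → ℝ} (hg : Integrable g μ) (hKg : ∀ y, |K y| ≤ g y) (hφ : MemLp φ ⊤ μ) :
    |∫ y, K y * φ y ∂μ| ≤ (∫ y, g y ∂μ) * (eLpNorm φ ⊤ μ).toReal := by
  rw [← integral_mul_const, ← norm_eq_abs]
  refine norm_integral_le_of_norm_le (hg.mul_const _) ?_
  filter_upwards [hφ.ae_abs_le_eLpNorm_top] with y hy
  rw [norm_eq_abs, abs_mul]
  exact mul_le_mul (hKg y) hy (abs_nonneg _) ((abs_nonneg _).trans (hKg y))

variable {E : Type*} [NormedAddCommGroup E] [InnerProductSpace ℝ E] [FiniteDimensional ℝ E]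
  [MeasurableSpace E] [BorelSpace E] {b : ℝ}

lemma integral_exp_neg_mul_sq_norm_sub (hb : 0 < b) (x : E) :
    ∫ y : E, exp (-b * ‖x - y‖ ^ 2) = (π / b) ^ (Module.finrank ℝ E / 2 : ℝ) := by
  rw [integral_sub_left_eq_self (fun y => exp (-b * ‖y‖ ^ 2)),
    GaussianFourier.integral_rexp_neg_mul_sq_norm hb]

lemma integrable_exp_neg_mul_sq_norm_sub (hb : 0 < b) (x : E) :
    Integrable (fun y : E => exp (-b * ‖x - y‖ ^ 2)) :=
  .of_integral_ne_zero (by rw [integral_exp_neg_mul_sq_norm_sub hb]; positivity)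

variable {e : E} {φ : E → ℝ}

lemma integrable_innerGaussian_sub_mul (hb : 0 < b) (he : ‖e‖ ≤ 1) (hφ : MemLp φ ⊤) (x : E) :
    Integrable (fun y => innerGaussian b e (x - y) * φ y) := by
  refine Integrable.mul_of_top_left ?_ hφ
  refine ((integrable_exp_neg_mul_sq_norm_sub (half_pos hb) x).div_const √b).mono'
    ((continuous_innerGaussian b e).comp (continuous_sub_left x)).aestronglyMeasurable ?_
  exact .of_forall fun y => by simpa using abs_innerGaussian_le hb he (x - y)

lemma abs_integral_innerGaussian_sub_mul_le (hb : 0 < b) (he : ‖e‖ ≤ 1) (hφ : MemLp φ ⊤)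
    (x : E) :
    |∫ y, innerGaussian b e (x - y) * φ y| ≤
      (2 * π / b) ^ (Module.finrank ℝ E / 2 : ℝ) / √b * (eLpNorm φ ⊤ volume).toReal := by
  have := abs_integral_mul_le_of_abs_le
    ((integrable_exp_neg_mul_sq_norm_sub (half_pos hb) x).div_const √b)
    (fun y => abs_innerGaussian_le hb he (x - y)) hφ
  rwa [integral_div, integral_exp_neg_mul_sq_norm_sub (half_pos hb), div_div_eq_mul_div,
    mul_comm π] at this

lemma abs_integral_innerGaussian_sub_mul_sub_le (hb : 0 < b) (he : ‖e‖ ≤ 1) (hφ : MemLp φ ⊤)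
    (x z : E) :
    |(∫ y, innerGaussian b e (x - y) * φ y) - ∫ y, innerGaussian b e (z - y) * φ y| ≤
      4 * exp (b / 2 * ‖x - z‖ ^ 2) * ‖x - z‖ * (4 * π / b) ^ (Module.finrank ℝ E / 2 : ℝ) *
        (eLpNorm φ ⊤ volume).toReal := by
  have hb4 : 0 < b / 4 := by positivity
  rw [← integral_sub (integrable_innerGaussian_sub_mul hb he hφ x)
    (integrable_innerGaussian_sub_mul hb he hφ z)]
  simp_rw [← sub_mul]
  have := abs_integral_mul_le_of_abs_le
    ((integrable_exp_neg_mul_sq_norm_sub hb4 z).const_mul (4 * exp (b / 2 * ‖x - z‖ ^ 2) * ‖x - z‖))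
    (fun y => by simpa using abs_innerGaussian_add_sub_le hb.le he (z - y) (x - z)) hφ
  rwa [integral_const_mul, integral_exp_neg_mul_sq_norm_sub hb4, div_div_eq_mul_div,
    mul_comm π] at this

end Integral

section Heat

variable {n : ℕ} {t : ℝ} {e : Eu n} {φ : Eu n → ℝ}

lemma heatK_one_eq (ht : 0 < t) :
    heatK n 1 t = fun w => ((4 * t)⁻¹ / π) ^ (n / 2 : ℝ) * exp (-(4 * t)⁻¹ * ‖w‖ ^ 2) := by
  funext w
  rw [heatK, neg_div, rpow_neg (by positivity), ← inv_rpow (by positivity)]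
  congr 2
  · field_simp
  · ring

lemma fderiv_heatK_one_apply (ht : 0 < t) (w e : Eu n) :
    fderiv ℝ (heatK n 1 t) w e =
      -(2 * (4 * t)⁻¹ * ((4 * t)⁻¹ / π) ^ (n / 2 : ℝ)) * innerGaussian (4 * t)⁻¹ e w := by
  rw [heatK_one_eq ht, ((hasFDerivAt_exp_neg_mul_sq_norm _ w).const_mul _).fderiv]
  simp only [neg_mul, neg_smul, smul_neg, neg_apply, smul_apply, coe_innerSL_apply, smul_eq_mul,
    innerGaussian, real_inner_comm, neg_inj]
  ring

lemma heatK_normalization_mul_rpow (ht : 0 < t) (a : ℝ) (ha : 0 ≤ a) :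
    ((4 * t)⁻¹ / π) ^ (n / 2 : ℝ) * (a * π / (4 * t)⁻¹) ^ (n / 2 : ℝ) = a ^ (n / 2 : ℝ) := by
  rw [← mul_rpow (by positivity) (by positivity)]
  congr 1
  field_simp

lemma abs_integral_fderiv_heatK_one_mul_le (ht : 0 < t) (he : ‖e‖ ≤ 1) (hφ : MemLp φ ⊤)
    (x : Eu n) :
    |∫ y, fderiv ℝ (heatK n 1 t) (x - y) e * φ y| ≤
      2 ^ (n / 2 : ℝ) * (eLpNorm φ ⊤ volume).toReal / √t := by
  have hb : 0 < (4 * t)⁻¹ := by positivity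
  simp_rw [fderiv_heatK_one_apply ht, mul_assoc]
  rw [integral_const_mul, abs_mul, abs_neg, abs_of_pos (by positivity)]
  refine (mul_le_mul_of_nonneg_left (abs_integral_innerGaussian_sub_mul_le hb he hφ x)
    (by positivity)).trans_eq ?_
  rw [finrank_euclideanSpace_fin, sqrt_inv_four_mul t, ← heatK_normalization_mul_rpow ht 2 zero_le_two]
  generalize ((4 * t)⁻¹ / π) ^ (n / 2 : ℝ) = c
  generalize (2 * π / (4 * t)⁻¹) ^ (n / 2 : ℝ) = g
  field_simp
  rw [sq_sqrt ht.le]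
  ring

lemma abs_integral_fderiv_heatK_one_mul_sub_le (ht : 0 < t) (he : ‖e‖ ≤ 1) (hφ : MemLp φ ⊤)
    (x z : Eu n) :
    |(∫ y, fderiv ℝ (heatK n 1 t) (x - y) e * φ y) - ∫ y, fderiv ℝ (heatK n 1 t) (z - y) e * φ y| ≤
      2 * 4 ^ (n / 2 : ℝ) * exp (‖x - z‖ ^ 2 / (8 * t)) * ‖x - z‖ *
        (eLpNorm φ ⊤ volume).toReal / t := by
  have hb : 0 < (4 * t)⁻¹ := by positivity
  simp_rw [fderiv_heatK_one_apply ht, mul_assoc]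
  rw [integral_const_mul, integral_const_mul, ← mul_sub, abs_mul, abs_neg,
    abs_of_pos (by positivity)]
  refine (mul_le_mul_of_nonneg_left (abs_integral_innerGaussian_sub_mul_sub_le hb he hφ x z)
    (by positivity)).trans_eq ?_
  rw [finrank_euclideanSpace_fin, ← heatK_normalization_mul_rpow ht 4 zero_le_four,
    show (4 * t)⁻¹ / 2 * ‖x - z‖ ^ 2 = ‖x - z‖ ^ 2 / (8 * t) by field_simp; ring]
  generalize ((4 * t)⁻¹ / π) ^ (n / 2 : ℝ) = c
  generalize (4 * π / (4 * t)⁻¹) ^ (n / 2 : ℝ) = g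
  field_simp

lemma abs_integral_fderiv_heatK_one_mul_sub_le_min (ht : 0 < t) (he : ‖e‖ ≤ 1)
    (hφ : MemLp φ ⊤) (x z : Eu n) :
    |(∫ y, fderiv ℝ (heatK n 1 t) (x - y) e * φ y) - ∫ y, fderiv ℝ (heatK n 1 t) (z - y) e * φ y| ≤
      2 * exp (1 / 8) * 4 ^ (n / 2 : ℝ) * (eLpNorm φ ⊤ volume).toReal / √t *
        min 1 (‖x - z‖ / √t) := by
  have hs : 0 < √t := sqrt_pos.2 ht
  have hM : 0 ≤ (eLpNorm φ ⊤ volume).toReal := ENNReal.toReal_nonneg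
  have hexp : 1 ≤ exp (1 / 8 : ℝ) := one_le_exp (by norm_num)
  have h24 : (2 : ℝ) ^ (n / 2 : ℝ) ≤ 4 ^ (n / 2 : ℝ) := by gcongr; norm_num
  rcases le_total ‖x - z‖ √t with hnear | hfar
  · rw [min_eq_right ((div_le_one hs).2 hnear)]
    refine (abs_integral_fderiv_heatK_one_mul_sub_le ht he hφ x z).trans ?_
    have hsq : ‖x - z‖ ^ 2 ≤ t := by
      simpa [sq_sqrt ht.le] using pow_le_pow_left₀ (norm_nonneg _) hnear 2
    have : exp (‖x - z‖ ^ 2 / (8 * t)) ≤ exp (1 / 8) := by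
      rw [exp_le_exp, div_le_div_iff₀ (by positivity) (by norm_num)]
      linarith
    calc _ ≤ 2 * 4 ^ (n / 2 : ℝ) * exp (1 / 8) * ‖x - z‖ * (eLpNorm φ ⊤ volume).toReal / t := by
          gcongr
      _ = _ := by rw [div_mul_div_comm, mul_self_sqrt ht.le]; ring
  · rw [min_eq_left ((one_le_div hs).2 hfar), mul_one]
    refine (abs_sub _ _).trans ?_
    refine (add_le_add (abs_integral_fderiv_heatK_one_mul_le ht he hφ x)
      (abs_integral_fderiv_heatK_one_mul_le ht he hφ z)).trans ?_
    rw [← add_div, ← two_mul, ← mul_assoc]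
    gcongr
    nlinarith [rpow_nonneg zero_le_two (n / 2 : ℝ)]

end Heat

theorem statement19_general (n : ℕ) (γ : ℝ) (hγ : γ ∈ Ioo (0:ℝ) 1) :
    ∃ C > (0:ℝ), ∀ (t : ℝ), 0 < t → ∀ (j : Fin n) (φ : Eu n → ℝ), MemLp φ ⊤ volume →
      ∀ x z : Eu n, x ≠ z →
        |(∫ y : Eu n, fderiv ℝ (heatK n 1 t) (x - y) (EuclideanSpace.single j 1) * φ y)
          - ∫ y : Eu n, fderiv ℝ (heatK n 1 t) (z - y) (EuclideanSpace.single j 1) * φ y|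
          ≤ C * t ^ (-(1 + γ) / 2) * (eLpNorm φ ⊤ volume).toReal * ‖x - z‖ ^ γ := by
  refine ⟨2 * exp (1 / 8) * 4 ^ (n / 2 : ℝ), by positivity, fun t ht j φ hφ x z _ => ?_⟩
  have he : ‖EuclideanSpace.single j (1 : ℝ)‖ ≤ 1 := by simp
  have hs : 0 < √t := sqrt_pos.2 ht
  calc _ ≤ 2 * exp (1 / 8) * 4 ^ (n / 2 : ℝ) * (eLpNorm φ ⊤ volume).toReal / √t *
          min 1 (‖x - z‖ / √t) := abs_integral_fderiv_heatK_one_mul_sub_le_min ht he hφ x z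
    _ ≤ 2 * exp (1 / 8) * 4 ^ (n / 2 : ℝ) * (eLpNorm φ ⊤ volume).toReal / √t *
          (‖x - z‖ / √t) ^ γ := by
        gcongr
        exact min_one_le_rpow (by positivity) hγ.1.le hγ.2.le
    _ = _ := by
        rw [div_rpow (norm_nonneg _) hs.le, ← inv_sqrt_mul_sqrt_rpow ht γ]
        field_simp

/-- Hölder estimate for the spatial gradient of the heat semigroup:
`[(∂H/∂x_j)(t) * φ]_γ ≤ C t^{-(1+γ)/2} ‖φ‖_{L^∞}`. -/
theorem statement19 (n : ℕ) (hn : 1 ≤ n) (γ : ℝ) (hγ : γ ∈ Ioo (0:ℝ) 1) :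
    ∃ C > (0:ℝ), ∀ (t : ℝ), 0 < t → ∀ (j : Fin n) (φ : Eu n → ℝ), MemLp φ ⊤ volume →
      ∀ x z : Eu n, x ≠ z →
        |(∫ y : Eu n, fderiv ℝ (heatK n 1 t) (x - y) (EuclideanSpace.single j 1) * φ y)
          - ∫ y : Eu n, fderiv ℝ (heatK n 1 t) (z - y) (EuclideanSpace.single j 1) * φ y|
          ≤ C * t ^ (-(1 + γ) / 2) * (eLpNorm φ ⊤ volume).toReal * ‖x - z‖ ^ γ :=
  statement19_general n γ hγ
end
end
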